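/- arXiv:0803.1156 — 5 statements merged into one kernel-verified Lean document; each statement's English description precedes it below -/
import Mathlib

section
/- Let (M, B, π, F) be a smooth fiber bundle with total space M, base B, fiber F and smooth projection π : M → B, where M and B are smooth finite-dimensional real manifolds (Hausdorff and second countable). Let H : M → ℝ^K and g : B → ℝ^k be smooth maps, write M_H = {x ∈ M : H(x) = 0} and B_g = {y ∈ B : g(y) = 0}, assume π(M_H) = B_g and assume the differential dg_y : T_yB → ℝ^k is surjective at every y ∈ B_g. Then for a smooth function f : B → ℝ, the pullback f ∘ π vanishes identically on M_H if and only if there exists a smooth map λ : B → ℝ^k such that f(y) = Σ_{s=1}^{k} λ^s(y) g^s(y) for all y ∈ B. -/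
/-!
Away from the zeros of `g`, `λ = f g / ‖g‖²` works. Near a zero, `g` is a submersion, hence the
first component of a chart `(g, P)`; in these coordinates `f` vanishes where the first coordinate
does, so Hadamard's formula `f (w, u) = (∫₀¹ ∂_w f (t w, u) dt) w` writes `f` as `⟪λ, g⟫` with
smooth `λ`. The admissible values of `λ` at a point form an affine hyperplane, so a smooth
partition of unity glues the local solutions. Finally `π (M_H) = B_g` says that `f ∘ π` vanishes on
`M_H` exactly when `f` vanishes on `B_g`.
-/

open scoped Manifold
open Function

open Set Filter Topology
open scoped ContDiff RealInnerProductSpace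

universe u

section ParametricIntegral

variable {X : Type u} [NormedAddCommGroup X] [NormedSpace ℝ X] [FiniteDimensional ℝ X]

theorem hasFDerivAt_intervalIntegral_of_contDiff_uncurry
    {F : Type u} [NormedAddCommGroup F] [NormedSpace ℝ F] [CompleteSpace F]
    {G : X → ℝ → F} (hG : ContDiff ℝ 1 (uncurry G)) (a b : ℝ) (x₀ : X) :
    HasFDerivAt (fun x => ∫ t in a..b, G x t)
      (∫ t in a..b, (fderiv ℝ (uncurry G) (x₀, t)).comp (.inl ℝ X ℝ)) x₀ := by
  have hG' : Continuous fun p : X × ℝ => (fderiv ℝ (uncurry G) p).comp (.inl ℝ X ℝ) :=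
    (hG.continuous_fderiv one_ne_zero).clm_comp continuous_const
  obtain ⟨C, hC⟩ := ((isCompact_closedBall x₀ 1).prod isCompact_uIcc).exists_bound_of_continuousOn
    hG'.continuousOn
  refine intervalIntegral.hasFDerivAt_integral_of_dominated_of_fderiv_le (𝕜 := ℝ) (F := G)
    (F' := fun x t => (fderiv ℝ (uncurry G) (x, t)).comp (.inl ℝ X ℝ)) (bound := fun _ => C)
    (Metric.ball_mem_nhds x₀ zero_lt_one) ?_ ?_ ?_ ?_
    (intervalIntegrable_const (μ := MeasureTheory.volume)) ?_
  · exact .of_forall fun x => (hG.continuous.comp (Continuous.prodMk_right x)).aestronglyMeasurable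
  · exact (hG.continuous.comp (Continuous.prodMk_right x₀)).intervalIntegrable _ _
  · exact (hG'.comp (Continuous.prodMk_right x₀)).aestronglyMeasurable
  · exact .of_forall fun t ht x hx =>
      hC (x, t) ⟨Metric.ball_subset_closedBall hx, uIoc_subset_uIcc ht⟩
  · refine .of_forall fun t _ x _ => ?_
    have hinl : HasFDerivAt (fun y : X => (y, t)) (ContinuousLinearMap.inl ℝ X ℝ) x :=
      (hasFDerivAt_id x).prodMk (hasFDerivAt_const t x)
    exact ((hG.differentiable one_ne_zero (x, t)).hasFDerivAt).comp x hinl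

-- The codomain changes along the induction (`F` becomes `X →L[ℝ] F`), hence a single universe.
theorem contDiff_intervalIntegral_of_contDiff_uncurry (n : ℕ) :
    ∀ {F : Type u} [NormedAddCommGroup F] [NormedSpace ℝ F] [CompleteSpace F]
      {G : X → ℝ → F}, ContDiff ℝ ∞ (uncurry G) → ∀ a b : ℝ,
      ContDiff ℝ n fun x => ∫ t in a..b, G x t := by
  induction n with
  | zero =>
    intro F _ _ _ G hG a b
    exact contDiff_zero.2
      (intervalIntegral.continuous_parametric_intervalIntegral_of_continuous' hG.continuous a b)
  | succ n ih =>
    intro F _ _ _ G hG a b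
    have hG1 : ContDiff ℝ 1 (uncurry G) := hG.of_le (by exact_mod_cast le_top)
    have hderiv := hasFDerivAt_intervalIntegral_of_contDiff_uncurry hG1 a b
    rw [Nat.cast_succ, contDiff_succ_iff_fderiv]
    refine ⟨fun x => (hderiv x).differentiableAt, by simp, ?_⟩
    rw [funext fun x => (hderiv x).fderiv]
    exact ih (G := fun x t => (fderiv ℝ (uncurry G) (x, t)).comp (.inl ℝ X ℝ))
      ((hG.fderiv_right (by simp)).clm_comp contDiff_const) a b

theorem ContDiff.intervalIntegral_of_uncurry
    {F : Type u} [NormedAddCommGroup F] [NormedSpace ℝ F] [CompleteSpace F]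
    {G : X → ℝ → F} (hG : ContDiff ℝ ∞ (uncurry G)) (a b : ℝ) :
    ContDiff ℝ ∞ fun x => ∫ t in a..b, G x t :=
  contDiff_infty.2 fun n => contDiff_intervalIntegral_of_contDiff_uncurry n hG a b

end ParametricIntegral

theorem ContDiff.exists_eq_clm_apply_fst
    {X Y G : Type u} [NormedAddCommGroup X] [NormedSpace ℝ X] [FiniteDimensional ℝ X]
    [NormedAddCommGroup Y] [NormedSpace ℝ Y] [FiniteDimensional ℝ Y]
    [NormedAddCommGroup G] [NormedSpace ℝ G] [CompleteSpace G]
    {h : Y × X → G} (hh : ContDiff ℝ ∞ h) (h0 : ∀ x, h (0, x) = 0) :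
    ∃ L : Y × X → (Y →L[ℝ] G), ContDiff ℝ ∞ L ∧ ∀ p, h p = L p p.1 := by
  set dh : Y × X → ℝ → (Y →L[ℝ] G) := fun p t => (fderiv ℝ h (t • p.1, p.2)).comp (.inl ℝ Y X)
  have hdh : ContDiff ℝ ∞ (uncurry dh) := by
    have hray : ContDiff ℝ ∞ fun q : (Y × X) × ℝ => (q.2 • q.1.1, q.1.2) := by fun_prop
    exact ((hh.fderiv_right (by simp)).comp hray).clm_comp contDiff_const
  refine ⟨fun p => ∫ t in (0 : ℝ)..1, dh p t, hdh.intervalIntegral_of_uncurry 0 1, fun p => ?_⟩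
  have hdh_p : Continuous (dh p) := hdh.continuous.comp (Continuous.prodMk_right p)
  have hray_deriv : ∀ t : ℝ, HasDerivAt (fun s : ℝ => h (s • p.1, p.2)) (dh p t p.1) t := by
    intro t
    have hseg : HasDerivAt (fun s : ℝ => (s • p.1, p.2)) (p.1, (0 : X)) t :=
      (by simpa using (hasDerivAt_id t).smul_const p.1 : HasDerivAt _ p.1 t).prodMk
        (hasDerivAt_const t p.2)
    exact ((hh.differentiable (by simp) _).hasFDerivAt).comp_hasDerivAt t hseg
  rw [ContinuousLinearMap.intervalIntegral_apply (hdh_p.intervalIntegrable 0 1),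
    intervalIntegral.integral_eq_sub_of_hasDerivAt (fun t _ => hray_deriv t)
      (((ContinuousLinearMap.apply ℝ G p.1).continuous.comp hdh_p).intervalIntegrable 0 1)]
  simp [h0]

theorem ContDiffOn.exists_openPartialHomeomorph_contDiffOn_symm
    {𝕜 E F : Type*} [RCLike 𝕜] [NormedAddCommGroup E] [NormedSpace 𝕜 E] [CompleteSpace E]
    [NormedAddCommGroup F] [NormedSpace 𝕜 F] {n : WithTop ℕ∞} {f : E → F} {f' : E ≃L[𝕜] F}
    {U : Set E} {x : E} (hf : ContDiffOn 𝕜 n f U) (hn : 1 ≤ n) (hU : IsOpen U) (hx : x ∈ U)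
    (hf' : HasFDerivAt f (f' : E →L[𝕜] F) x) :
    ∃ e : OpenPartialHomeomorph E F, ⇑e = f ∧ x ∈ e.source ∧ e.source ⊆ U ∧
      ContDiffOn 𝕜 n e e.source ∧ ContDiffOn 𝕜 n e.symm e.target := by
  have hn0 : n ≠ 0 := (zero_lt_one.trans_le hn).ne'
  set U' := U ∩ fderiv 𝕜 f ⁻¹' range ((↑) : (E ≃L[𝕜] F) → E →L[𝕜] F)
  have hU' : IsOpen U' :=
    (hf.continuousOn_fderiv_of_isOpen hU hn).isOpen_inter_preimage hU ContinuousLinearEquiv.isOpen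
  let e := (((hf.contDiffAt (hU.mem_nhds hx)).hasStrictFDerivAt' hf' hn0).toOpenPartialHomeomorph
    f).restrOpen U' hU'
  have he_source : ∀ y ∈ e.source, y ∈ U ∧ ∃ g' : E ≃L[𝕜] F, fderiv 𝕜 f y = g' :=
    fun y hy => ⟨hy.2.1, let ⟨g', hg'⟩ := hy.2.2; ⟨g', hg'.symm⟩⟩
  refine ⟨e, rfl, ⟨HasStrictFDerivAt.mem_toOpenPartialHomeomorph_source _, hx, f', hf'.fderiv.symm⟩,
    fun y hy => (he_source y hy).1, hf.mono fun y hy => (he_source y hy).1, fun q hq => ?_⟩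
  obtain ⟨hqU, g', hg'⟩ := he_source _ (e.map_target hq)
  have hfq : ContDiffAt 𝕜 n f (e.symm q) := hf.contDiffAt (hU.mem_nhds hqU)
  exact (e.contDiffAt_symm hq (hg' ▸ (hfq.differentiableAt hn0).hasFDerivAt) hfq).contDiffWithinAt

theorem ContDiffOn.exists_openPartialHomeomorph_fst_eq
    {E F : Type*} [NormedAddCommGroup E] [NormedSpace ℝ E] [FiniteDimensional ℝ E]
    [NormedAddCommGroup F] [NormedSpace ℝ F] [FiniteDimensional ℝ F]
    {G : E → F} {U : Set E} {x : E} (hG : ContDiffOn ℝ ∞ G U) (hU : IsOpen U) (hx : x ∈ U)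
    (hsurj : Surjective (fderiv ℝ G x)) :
    ∃ (N : Submodule ℝ E) (e : OpenPartialHomeomorph E (F × N)), x ∈ e.source ∧
      e.source ⊆ U ∧ ContDiffOn ℝ ∞ e e.source ∧ ContDiffOn ℝ ∞ e.symm e.target ∧
      ∀ y, (e y).1 = G y := by
  set D := fderiv ℝ G x
  obtain ⟨R, hR⟩ :=
    (D : E →ₗ[ℝ] F).exists_rightInverse_of_surjective (LinearMap.range_eq_top.2 hsurj)
  have hDR : RightInverse (LinearMap.toContinuousLinearMap R) D := LinearMap.ext_iff.1 hR
  set P := D.projKerOfRightInverse _ hDR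
  have hΦ : ContDiffOn ℝ ∞ (fun y => (G y, P y)) U := hG.prodMk P.contDiff.contDiffOn
  have hΦ' : HasFDerivAt (fun y => (G y, P y))
      ((ContinuousLinearEquiv.equivOfRightInverse D _ hDR : E ≃L[ℝ] F × D.ker) :
        E →L[ℝ] F × D.ker) x :=
    ((hG.differentiableOn (by simp) x hx).differentiableAt (hU.mem_nhds hx)).hasFDerivAt.prodMk
      P.hasFDerivAt
  obtain ⟨e, he, hxe, heU, he_smooth, he_symm⟩ :=
    hΦ.exists_openPartialHomeomorph_contDiffOn_symm (by simp) hU hx hΦ'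
  exact ⟨_, e, hxe, heU, he_smooth, he_symm, fun y => by rw [he]⟩

theorem ContDiffOn.exists_contDiffOn_eq_inner
    {E V : Type} [NormedAddCommGroup E] [NormedSpace ℝ E] [FiniteDimensional ℝ E]
    [NormedAddCommGroup V] [InnerProductSpace ℝ V] [FiniteDimensional ℝ V]
    {G : E → V} {f : E → ℝ} {U : Set E} {x : E} (hG : ContDiffOn ℝ ∞ G U)
    (hf : ContDiffOn ℝ ∞ f U) (hU : IsOpen U) (hx : x ∈ U) (hsurj : Surjective (fderiv ℝ G x))
    (hvan : ∀ y ∈ U, G y = 0 → f y = 0) :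
    ∃ W ∈ 𝓝 x, ∃ lam : E → V, ContDiffOn ℝ ∞ lam W ∧ ∀ y ∈ W, f y = ⟪lam y, G y⟫ := by
  obtain ⟨N, e, hxe, heU, he_smooth, he_symm, he_fst⟩ :=
    hG.exists_openPartialHomeomorph_fst_eq hU hx hsurj
  obtain ⟨r, hr, hball⟩ :=
    Metric.nhds_basis_closedBall.mem_iff.1 (e.open_target.mem_nhds (e.map_source hxe))
  let χ : ContDiffBump (e x) := ⟨r / 2, r, half_pos hr, half_lt_self hr⟩
  set h : V × N → ℝ := fun p => χ p * f (e.symm p)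
  have hχ : tsupport χ ⊆ e.target := χ.tsupport_eq ▸ hball
  have hh : ContDiff ℝ ∞ h := by
    refine contDiff_iff_contDiffAt.2 fun p => ?_
    by_cases hp : p ∈ tsupport χ
    · have hfe : ContDiffOn ℝ ∞ (f ∘ e.symm) e.target :=
        hf.comp he_symm fun q hq => heU (e.map_target hq)
      exact χ.contDiff.contDiffAt.mul (hfe.contDiffAt (e.open_target.mem_nhds (hχ hp)))
    · refine (contDiffAt_const (c := (0 : ℝ))).congr_of_eventuallyEq ?_
      filter_upwards [notMem_tsupport_iff_eventuallyEq.1 hp] with q hq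
      simp [h, hq]
  have h0 : ∀ u, h (0, u) = 0 := by
    intro u
    by_cases hu : (0, u) ∈ e.target
    · have hGu : G (e.symm (0, u)) = 0 := by rw [← he_fst, e.right_inv hu]
      simp [h, hvan _ (heU (e.map_target hu)) hGu]
    · simp [h, image_eq_zero_of_notMem_tsupport fun hχu => hu (hχ hχu)]
  obtain ⟨L, hL, hhL⟩ := hh.exists_eq_clm_apply_fst h0
  refine ⟨e.source ∩ e ⁻¹' Metric.ball (e x) (r / 2), inter_mem (e.open_source.mem_nhds hxe)
      (e.continuousAt hxe (Metric.ball_mem_nhds _ (half_pos hr))),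
    fun y => (InnerProductSpace.toDual ℝ V).symm (L (e y)), ?_, fun y hy => ?_⟩
  · exact (InnerProductSpace.toDual ℝ V).symm.toContinuousLinearEquiv.contDiff.comp_contDiffOn
      (hL.comp_contDiffOn (he_smooth.mono inter_subset_left))
  · have hχy : χ (e y) = 1 := χ.one_of_mem_closedBall (Metric.ball_subset_closedBall hy.2)
    rw [InnerProductSpace.toDual_symm_apply, ← he_fst, ← hhL]
    simp [h, hχy, e.left_inv hy.1]

section Manifold

variable {EB : Type} [NormedAddCommGroup EB] [NormedSpace ℝ EB]
  {HB : Type*} [TopologicalSpace HB] (I : ModelWithCorners ℝ EB HB)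
  {B : Type*} [TopologicalSpace B] [ChartedSpace HB B]
  {V : Type} [NormedAddCommGroup V] [InnerProductSpace ℝ V]
  {g : B → V} {f : B → ℝ}

theorem mfderiv_eq_fderiv_comp_extChartAt_symm [I.Boundaryless] {y : B}
    (hg : MDifferentiableAt I 𝓘(ℝ, V) g y) :
    mfderiv I 𝓘(ℝ, V) g y = fderiv ℝ (g ∘ (extChartAt I y).symm) (extChartAt I y y) := by
  rw [hg.mfderiv, I.range_eq_univ, fderivWithin_univ]
  rfl

theorem ContMDiff.exists_contMDiffOn_eq_inner_of_ne_zero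
    (hg : ContMDiff I 𝓘(ℝ, V) ∞ g) (hf : ContMDiff I 𝓘(ℝ, ℝ) ∞ f) {y : B} (hy : g y ≠ 0) :
    ∃ W ∈ 𝓝 y, ∃ lam : B → V, ContMDiffOn I 𝓘(ℝ, V) ∞ lam W ∧ ∀ z ∈ W, f z = ⟪lam z, g z⟫ := by
  have hW : IsOpen {z | g z ≠ 0} := isOpen_ne_fun hg.continuous continuous_const
  have hnorm : ∀ z ∈ {z | g z ≠ 0}, ‖g z‖ ^ 2 ≠ 0 := fun z hz => by simpa using hz
  refine ⟨_, hW.mem_nhds hy, fun z => (f z / ‖g z‖ ^ 2) • g z, ?_, fun z hz => ?_⟩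
  · exact (hf.contMDiffOn.div₀ ((contDiff_norm_sq ℝ).contMDiff.comp hg).contMDiffOn hnorm).smul
      hg.contMDiffOn
  · rw [real_inner_smul_left, real_inner_self_eq_norm_sq, div_mul_cancel₀ _ (hnorm z hz)]

variable [FiniteDimensional ℝ EB] [FiniteDimensional ℝ V] [I.Boundaryless] [IsManifold I ∞ B]

theorem ContMDiff.exists_contMDiffOn_eq_inner_of_surjective
    (hg : ContMDiff I 𝓘(ℝ, V) ∞ g) (hf : ContMDiff I 𝓘(ℝ, ℝ) ∞ f) {y : B}
    (hsurj : Surjective (mfderiv I 𝓘(ℝ, V) g y)) (hvan : ∀ z, g z = 0 → f z = 0) :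
    ∃ W ∈ 𝓝 y, ∃ lam : B → V, ContMDiffOn I 𝓘(ℝ, V) ∞ lam W ∧ ∀ z ∈ W, f z = ⟪lam z, g z⟫ := by
  set φ := extChartAt I y
  have hφ_symm : ContMDiffOn 𝓘(ℝ, EB) I ∞ φ.symm φ.target := contMDiffOn_extChartAt_symm y
  rw [mfderiv_eq_fderiv_comp_extChartAt_symm I (hg.mdifferentiableAt (by simp))] at hsurj
  obtain ⟨W, hW, lam, hlam, hflam⟩ :=
    (hg.comp_contMDiffOn hφ_symm).contDiffOn.exists_contDiffOn_eq_inner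
      (hf.comp_contMDiffOn hφ_symm).contDiffOn (isOpen_extChartAt_target y)
      (mem_extChartAt_target y) hsurj fun z _ hz => hvan _ hz
  refine ⟨φ.source ∩ φ ⁻¹' W, inter_mem (extChartAt_source_mem_nhds y)
      ((continuousAt_extChartAt y).preimage_mem_nhds hW), lam ∘ φ, ?_, fun z hz => ?_⟩
  · exact hlam.contMDiffOn.comp (contMDiffOn_extChartAt.mono (by simp [φ]))
      fun z hz => hz.2
  · simpa [φ.left_inv hz.1] using hflam (φ z) hz.2

variable [T2Space B] [SigmaCompactSpace B]

theorem ContMDiff.exists_contMDiff_eq_inner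
    (hg : ContMDiff I 𝓘(ℝ, V) ∞ g) (hf : ContMDiff I 𝓘(ℝ, ℝ) ∞ f)
    (hgrank : ∀ y, g y = 0 → Surjective (mfderiv I 𝓘(ℝ, V) g y))
    (hvan : ∀ y, g y = 0 → f y = 0) :
    ∃ lam : B → V, ContMDiff I 𝓘(ℝ, V) ∞ lam ∧ ∀ y, f y = ⟪lam y, g y⟫ := by
  have hconv : ∀ y, Convex ℝ {c : V | ⟪c, g y⟫ = f y} := fun y =>
    convex_hyperplane ⟨fun a b => inner_add_left a b _, fun r a => real_inner_smul_left a _ r⟩ _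
  have hloc : ∀ y, ∃ W ∈ 𝓝 y, ∃ lam : B → V, ContMDiffOn I 𝓘(ℝ, V) ∞ lam W ∧
      ∀ z ∈ W, lam z ∈ {c : V | ⟪c, g z⟫ = f z} := by
    intro y
    classical
    obtain ⟨W, hW, lam, hlam, hflam⟩ := if hy : g y = 0 then
        hg.exists_contMDiffOn_eq_inner_of_surjective I hf (hgrank y hy) hvan
      else hg.exists_contMDiffOn_eq_inner_of_ne_zero I hf hy
    exact ⟨W, hW, lam, hlam, fun z hz => (hflam z hz).symm⟩
  obtain ⟨lam, hlam⟩ := exists_contMDiffMap_forall_mem_convex_of_local I hconv hloc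
  exact ⟨lam, lam.contMDiff, fun y => (hlam y).symm⟩

end Manifold

theorem hadamard_fiber_bundles_general
    {M : Type}
    {EB : Type} [NormedAddCommGroup EB] [NormedSpace ℝ EB] [FiniteDimensional ℝ EB]
    {HB : Type} [TopologicalSpace HB] (IB : ModelWithCorners ℝ EB HB) [IB.Boundaryless]
    {B : Type} [TopologicalSpace B] [ChartedSpace HB B] [IsManifold IB (⊤ : ℕ∞) B]
    [T2Space B] [SecondCountableTopology B]
    (π : M → B)
    (k K : ℕ)
    (H : M → EuclideanSpace ℝ (Fin K))
    (g : B → EuclideanSpace ℝ (Fin k)) (hg : ContMDiff IB (𝓡 k) (⊤ : ℕ∞) g)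
    (hproj : π '' {x : M | H x = 0} = {y : B | g y = 0})
    (hgrank : ∀ y : B, g y = 0 → Surjective (mfderiv IB (𝓡 k) g y))
    (f : B → ℝ) (hf : ContMDiff IB 𝓘(ℝ, ℝ) (⊤ : ℕ∞) f) :
    (∀ x : M, H x = 0 → f (π x) = 0) ↔
    ∃ lam : B → EuclideanSpace ℝ (Fin k),
      ContMDiff IB (𝓡 k) (⊤ : ℕ∞) lam ∧ ∀ y : B, f y = ∑ s : Fin k, lam y s * g y s := by
  have hzero : ∀ y, y ∈ π '' {x | H x = 0} ↔ g y = 0 := Set.ext_iff.1 hproj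
  constructor
  · intro hvan
    have : LocallyCompactSpace B := Manifold.locallyCompact_of_finiteDimensional IB
    obtain ⟨lam, hlam, hflam⟩ := hg.exists_contMDiff_eq_inner IB hf hgrank fun y hy => by
      obtain ⟨x, hx, rfl⟩ := (hzero y).2 hy
      exact hvan x hx
    exact ⟨lam, hlam, fun y => by simp [hflam y, PiLp.inner_apply, mul_comm]⟩
  · rintro ⟨lam, -, hlam⟩ x hx
    simp [hlam, (hzero (π x)).1 (mem_image_of_mem π hx)]

/-- Hadamard lemma for fiber bundles (Lemma 4.2 of the paper).
`π : M → B` is the smooth projection of a smooth fiber bundle with fiber `F`, `M` and `B`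
smooth finite-dimensional real manifolds (Hausdorff, second countable).  If
`H : M → ℝ^K` and `g : B → ℝ^k` are smooth, `π(M_H) = B_g`, and the differential of `g`
is surjective at every point of `B_g`, then for smooth `f : B → ℝ` the pullback `f ∘ π`
vanishes on `M_H` iff `f = Σ_s λ^s g^s` for some smooth `λ : B → ℝ^k`. -/
theorem hadamard_fiber_bundles
    {EM : Type} [NormedAddCommGroup EM] [NormedSpace ℝ EM] [FiniteDimensional ℝ EM]
    {HM : Type} [TopologicalSpace HM] (IM : ModelWithCorners ℝ EM HM) [IM.Boundaryless]
    {M : Type} [TopologicalSpace M] [ChartedSpace HM M] [IsManifold IM (⊤ : ℕ∞) M]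
    [T2Space M] [SecondCountableTopology M]
    {EB : Type} [NormedAddCommGroup EB] [NormedSpace ℝ EB] [FiniteDimensional ℝ EB]
    {HB : Type} [TopologicalSpace HB] (IB : ModelWithCorners ℝ EB HB) [IB.Boundaryless]
    {B : Type} [TopologicalSpace B] [ChartedSpace HB B] [IsManifold IB (⊤ : ℕ∞) B]
    [T2Space B] [SecondCountableTopology B]
    (F : Type) [TopologicalSpace F]
    (π : M → B) (hπ : ContMDiff IM IB (⊤ : ℕ∞) π)
    (hbundle : ∀ y : B, ∃ e : Bundle.Trivialization F π, y ∈ e.baseSet)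
    (k K : ℕ)
    (H : M → EuclideanSpace ℝ (Fin K)) (hH : ContMDiff IM (𝓡 K) (⊤ : ℕ∞) H)
    (g : B → EuclideanSpace ℝ (Fin k)) (hg : ContMDiff IB (𝓡 k) (⊤ : ℕ∞) g)
    (hproj : π '' {x : M | H x = 0} = {y : B | g y = 0})
    (hgrank : ∀ y : B, g y = 0 → Surjective (mfderiv IB (𝓡 k) g y))
    (f : B → ℝ) (hf : ContMDiff IB 𝓘(ℝ, ℝ) (⊤ : ℕ∞) f) :
    (∀ x : M, H x = 0 → f (π x) = 0) ↔
    ∃ lam : B → EuclideanSpace ℝ (Fin k),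
      ContMDiff IB (𝓡 k) (⊤ : ℕ∞) lam ∧ ∀ y : B, f y = ∑ s : Fin k, lam y s * g y s :=
  hadamard_fiber_bundles_general IB π k K H g hg hproj hgrank f hf
end

section
/- Let A : ℝ → ℝ be smooth. Let u : ℝ² → ℝ be a smooth function of (t,x) satisfying u_t = ∂_x(A(u) u_x) + A(u) u_x at every point. Then the identity ∂_t(e^x·u) − ∂_x(e^x·A(u)·u_x) = 0 holds at every point of ℝ², i.e., (e^x u, −e^x A(u) u_x) is a conserved vector of the equation u_t = (A(u)u_x)_x + A(u)u_x with characteristic λ = e^x. -/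
/-- Partial derivative with respect to the first variable. -/
noncomputable def pt (f : ℝ × ℝ → ℝ) (p : ℝ × ℝ) : ℝ := fderiv ℝ f p (1, 0)

/-- Partial derivative with respect to the second variable. -/
noncomputable def px (f : ℝ × ℝ → ℝ) (p : ℝ × ℝ) : ℝ := fderiv ℝ f p (0, 1)

lemma pt_mul (f g : ℝ × ℝ → ℝ) (p : ℝ × ℝ) (hf : DifferentiableAt ℝ f p)
    (hg : DifferentiableAt ℝ g p) :
    pt (fun q => f q * g q) p = pt f p * g p + f p * pt g p := by
  unfold pt
  rw [fderiv_fun_mul hf hg]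
  simp
  ring

lemma px_mul (f g : ℝ × ℝ → ℝ) (p : ℝ × ℝ) (hf : DifferentiableAt ℝ f p)
    (hg : DifferentiableAt ℝ g p) :
    px (fun q => f q * g q) p = px f p * g p + f p * px g p := by
  unfold px
  rw [fderiv_fun_mul hf hg]
  simp
  ring

lemma hasFDerivAt_exp_snd (p : ℝ × ℝ) :
    HasFDerivAt (fun q : ℝ × ℝ => Real.exp q.2)
      (Real.exp p.2 • (ContinuousLinearMap.snd ℝ ℝ ℝ)) p :=
  (Real.hasDerivAt_exp p.2).comp_hasFDerivAt p (hasFDerivAt_snd)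

lemma pt_exp (p : ℝ × ℝ) : pt (fun q : ℝ × ℝ => Real.exp q.2) p = 0 := by
  unfold pt
  rw [(hasFDerivAt_exp_snd p).fderiv]
  simp

lemma px_exp (p : ℝ × ℝ) : px (fun q : ℝ × ℝ => Real.exp q.2) p = Real.exp p.2 := by
  unfold px
  rw [(hasFDerivAt_exp_snd p).fderiv]
  simp

lemma exp_snd_contDiff : ContDiff ℝ (⊤ : ℕ∞) (fun q : ℝ × ℝ => Real.exp q.2) :=
  Real.contDiff_exp.comp contDiff_snd

/-- The conservation law `F² = F²(A)`: if `u` solves `u_t = (A(u)u_x)_x + A(u)u_x`, then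
`(eˣ u, −eˣ A(u) u_x)` is a conserved vector with characteristic `λ = eˣ`. -/
theorem conserved_vector_F2
    (A : ℝ → ℝ) (hA : ContDiff ℝ (⊤ : ℕ∞) A)
    (u : ℝ × ℝ → ℝ) (hu : ContDiff ℝ (⊤ : ℕ∞) u)
    (heq : ∀ p, pt u p = px (fun q => A (u q) * px u q) p + A (u p) * px u p) :
    ∀ p, pt (fun q => Real.exp q.2 * u q) p
        - px (fun q => Real.exp q.2 * A (u q) * px u q) p = 0 := by
  intro p
  have hpxu : ContDiff ℝ (⊤ : ℕ∞) (px u) := by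
    have h1 : ContDiff ℝ (⊤ : ℕ∞) (fderiv ℝ u) := hu.fderiv_right (by simp)
    exact h1.clm_apply contDiff_const
  have hg : ContDiff ℝ (⊤ : ℕ∞) (fun q => A (u q) * px u q) := (hA.comp hu).mul hpxu
  have h1 : pt (fun q => Real.exp q.2 * u q) p
      = Real.exp p.2 * pt u p := by
    rw [pt_mul _ _ p (exp_snd_contDiff.differentiable (by simp) p)
      (hu.differentiable (by simp) p), pt_exp]
    ring
  have hfe : (fun q : ℝ × ℝ => Real.exp q.2 * A (u q) * px u q)
      = (fun q : ℝ × ℝ => Real.exp q.2 * (A (u q) * px u q)) := by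
    funext q; ring
  have h2 : px (fun q => Real.exp q.2 * A (u q) * px u q) p
      = Real.exp p.2 * (A (u p) * px u p)
        + Real.exp p.2 * px (fun q => A (u q) * px u q) p := by
    rw [hfe, px_mul _ _ p (exp_snd_contDiff.differentiable (by simp) p)
      (hg.differentiable (by simp) p), px_exp]
  rw [h1, h2, heq p]
  ring
end

section
/- Let A : ℝ → ℝ be smooth and let IA : ℝ → ℝ be a smooth function with IA' = A. Let u, v : ℝ² → ℝ be smooth functions of (t,x) satisfying the potential system v_x = u and v_t = A(u)·u_x + u·IA(u) at every point. Then the identity ∂_t(e^v) − ∂_x(e^v·IA(u)) = 0 holds at every point of ℝ², i.e., (e^v, −e^v·IA(u)) is a conserved vector of this potential system. -/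
/-- The purely potential conservation law `F⁴ = F⁴(A)`: if smooth `u, v` satisfy the
potential system `v_x = u`, `v_t = A(u)u_x + u·∫A(u)` of the diffusion–convection equation
with `B = ∫A + uA`, then `(e^v, −e^v·∫A(u))` is a conserved vector of this system. -/
theorem conserved_vector_F4
    (A IA : ℝ → ℝ) (hA : ContDiff ℝ (⊤ : ℕ∞) A) (hIA : ContDiff ℝ (⊤ : ℕ∞) IA)
    (hIA' : ∀ s, deriv IA s = A s)
    (u v : ℝ × ℝ → ℝ) (hu : ContDiff ℝ (⊤ : ℕ∞) u) (hv : ContDiff ℝ (⊤ : ℕ∞) v)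
    (h1 : ∀ p, px v p = u p)
    (h2 : ∀ p, pt v p = A (u p) * px u p + u p * IA (u p)) :
    ∀ p, pt (fun q => Real.exp (v q)) p
        - px (fun q => Real.exp (v q) * IA (u q)) p = 0 := by
  intro p
  have hvd : DifferentiableAt ℝ v p := (hv.differentiable (by simp)) p
  have hud : DifferentiableAt ℝ u p := (hu.differentiable (by simp)) p
  have hIAd : DifferentiableAt ℝ IA (u p) := (hIA.differentiable (by simp)) (u p)
  have hev : DifferentiableAt ℝ (fun q => Real.exp (v q)) p := hvd.exp
  have hIAu : DifferentiableAt ℝ (fun q => IA (u q)) p := hIAd.comp p hud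
  -- pt of exp(v)
  have e1 : pt (fun q => Real.exp (v q)) p = Real.exp (v p) * pt v p := by
    unfold pt
    rw [fderiv_exp hvd]
    simp
  -- px of IA ∘ u
  have e2 : px (fun q => IA (u q)) p = A (u p) * px u p := by
    unfold px
    have : fderiv ℝ (IA ∘ u) p = (fderiv ℝ IA (u p)).comp (fderiv ℝ u p) :=
      fderiv_comp p hIAd hud
    show fderiv ℝ (IA ∘ u) p (0, 1) = A (u p) * fderiv ℝ u p (0, 1)
    rw [this]
    simp only [ContinuousLinearMap.coe_comp', Function.comp_apply]
    rw [show fderiv ℝ IA (u p) (fderiv ℝ u p (0, 1))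
        = (fderiv ℝ u p (0, 1)) • fderiv ℝ IA (u p) 1 by
      rw [← (fderiv ℝ IA (u p)).map_smul]; norm_num]
    have : fderiv ℝ IA (u p) 1 = deriv IA (u p) := rfl
    rw [this, hIA' (u p)]
    simp [mul_comm]
  -- px of product
  have e3 : px (fun q => Real.exp (v q) * IA (u q)) p
      = px (fun q => Real.exp (v q)) p * IA (u p)
        + Real.exp (v p) * px (fun q => IA (u q)) p := by
    unfold px
    rw [fderiv_fun_mul hev hIAu]
    simp only [ContinuousLinearMap.add_apply, ContinuousLinearMap.coe_smul',
      Pi.smul_apply, smul_eq_mul]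
    ring
  have e4 : px (fun q => Real.exp (v q)) p = Real.exp (v p) * px v p := by
    unfold px
    rw [fderiv_exp hvd]
    simp
  rw [e1, e3, e4, e2, h1, h2]
  ring
end

section
/- Let u, v : ℝ² → ℝ be smooth functions of (t,x) with u nowhere vanishing, satisfying the potential system v_x = u and v_t = u^{-2}·u_x at every point. Let σ : ℝ² → ℝ, written σ = σ(t,w), be a smooth solution of the backward linear heat equation σ_t + σ_ww = 0. Then the identity ∂_t[σ(t, v(t,x))] + ∂_x[σ_w(t, v(t,x)) / u(t,x)] = 0 holds at every point of ℝ², i.e., (σ(t,v), σ_w(t,v)·u^{-1}) is a conserved vector of the potential system of the u^{-2}-diffusion equation. -/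
private lemma fderiv_decomp (f : ℝ × ℝ → ℝ) (q : ℝ × ℝ) (a b : ℝ) :
    fderiv ℝ f q (a, b) = a * pt f q + b * px f q := by
  have h : (a, b) = a • ((1:ℝ), (0:ℝ)) + b • ((0:ℝ), (1:ℝ)) := by
    simp [Prod.ext_iff]
  rw [h, map_add, map_smul, map_smul]
  simp [pt, px, mul_comm]

/-- The conservation laws `F⁵_σ` of the potential system `v_x = u`, `v_t = u⁻²u_x`
of the `u⁻²`-diffusion equation: for any solution `σ = σ(t,w)` of the backward linear
heat equation, `(σ(t,v), σ_w(t,v)·u⁻¹)` is a conserved vector. -/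
theorem conserved_vector_F5
    (u v : ℝ × ℝ → ℝ) (σ : ℝ × ℝ → ℝ)
    (hu : ContDiff ℝ (⊤ : ℕ∞) u) (hv : ContDiff ℝ (⊤ : ℕ∞) v) (hσ : ContDiff ℝ (⊤ : ℕ∞) σ)
    (hune : ∀ p, u p ≠ 0)
    (h1 : ∀ p, px v p = u p)
    (h2 : ∀ p, pt v p = (u p)⁻¹ ^ 2 * px u p)
    (hbackheat : ∀ p, pt σ p + px (px σ) p = 0) :
    ∀ p : ℝ × ℝ,
      pt (fun q => σ (q.1, v q)) p + px (fun q => px σ (q.1, v q) / u q) p = 0 := by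
  intro p
  have hvd := hv.differentiable (by simp)
  have hud := hu.differentiable (by simp)
  have hσd := hσ.differentiable (by simp)
  have hσ1 : ContDiff ℝ (⊤ : ℕ∞) (px σ) := by
    have h := hσ.fderiv_right (m := (⊤ : ℕ∞)) le_rfl
    exact h.clm_apply contDiff_const
  have hσ1d := hσ1.differentiable (by simp)
  set w : ℝ × ℝ := (p.1, v p) with hw
  set L : (ℝ × ℝ) →L[ℝ] ℝ × ℝ :=
    (ContinuousLinearMap.fst ℝ ℝ ℝ).prod (fderiv ℝ v p) with hL
  have hφ : HasFDerivAt (fun q : ℝ × ℝ => (q.1, v q)) L p :=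
    HasFDerivAt.prodMk hasFDerivAt_fst (hvd p).hasFDerivAt
  have hF : HasFDerivAt (fun q : ℝ × ℝ => σ (q.1, v q)) ((fderiv ℝ σ w).comp L) p :=
    (hσd w).hasFDerivAt.comp p hφ
  have hσφ : HasFDerivAt (fun q : ℝ × ℝ => px σ (q.1, v q)) ((fderiv ℝ (px σ) w).comp L) p :=
    by have := ((hσ1d w).hasFDerivAt : HasFDerivAt (px σ) (fderiv ℝ (px σ) w) w).comp p hφ; exact this
  have hinv : HasFDerivAt (fun q => (u q)⁻¹)
      ((-ContinuousLinearMap.mulLeftRight ℝ ℝ (u p)⁻¹ (u p)⁻¹).comp (fderiv ℝ u p)) p :=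
    (hasFDerivAt_inv' (hune p)).comp p (hud p).hasFDerivAt
  have hG : HasFDerivAt (fun q : ℝ × ℝ => px σ (q.1, v q) * (u q)⁻¹)
      (px σ w • ((-ContinuousLinearMap.mulLeftRight ℝ ℝ (u p)⁻¹ (u p)⁻¹).comp (fderiv ℝ u p))
        + (u p)⁻¹ • ((fderiv ℝ (px σ) w).comp L)) p :=
    hσφ.mul hinv
  have hL10 : L (1, 0) = (1, pt v p) := by
    simp [hL, pt]
  have hL01 : L (0, 1) = (0, u p) := by
    simp [hL, ← h1 p, px]
  have hFd : pt (fun q => σ (q.1, v q)) p = fderiv ℝ σ w (1, pt v p) := by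
    rw [pt, hF.fderiv, ContinuousLinearMap.comp_apply, hL10]
  have hGrw : (fun q : ℝ × ℝ => px σ (q.1, v q) / u q)
      = fun q : ℝ × ℝ => px σ (q.1, v q) * (u q)⁻¹ := by
    funext q; rw [div_eq_mul_inv]
  have hGd : px (fun q => px σ (q.1, v q) / u q) p
      = px σ w * (-((u p)⁻¹ * px u p * (u p)⁻¹)) + (u p)⁻¹ * fderiv ℝ (px σ) w (0, u p) := by
    rw [px, hGrw, hG.fderiv]
    simp [hL01, px, ContinuousLinearMap.mulLeftRight_apply]
  rw [hFd, hGd, fderiv_decomp σ, fderiv_decomp (px σ)]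
  have hbh := hbackheat w
  have hup := hune p
  rw [h2 p]
  have e1 : (u p)⁻¹ * u p = 1 := inv_mul_cancel₀ hup
  linear_combination hbh + px (px σ) w * e1
end

section
/- Let u, v : ℝ² → ℝ be smooth functions of (t,x) satisfying the potential system v_x = u and v_t = u_x + u² at every point, and let h : ℝ² → ℝ be a smooth solution of the backward linear heat equation h_t + h_xx = 0. Then the identity ∂_t[h·e^v] + ∂_x[(h_x − h·u)·e^v] = 0 holds at every point of ℝ², i.e., (h e^v, h_x e^v − h u e^v) is a conserved vector of the potential system of the Burgers equation. -/
lemma contDiff_px' {f : ℝ × ℝ → ℝ} (hf : ContDiff ℝ (⊤ : ℕ∞) f) : ContDiff ℝ (⊤ : ℕ∞) (px f) := by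
  have : px f = fun p => (ContinuousLinearMap.apply ℝ ℝ ((0:ℝ),(1:ℝ))) (fderiv ℝ f p) := rfl
  rw [this]
  exact (ContinuousLinearMap.apply ℝ ℝ ((0:ℝ),(1:ℝ))).contDiff.comp (hf.fderiv_right (by simp))

lemma d_mul {f g : ℝ × ℝ → ℝ} {p w : ℝ × ℝ} (hf : DifferentiableAt ℝ f p)
    (hg : DifferentiableAt ℝ g p) :
    fderiv ℝ (fun q => f q * g q) p w = fderiv ℝ f p w * g p + f p * fderiv ℝ g p w := by
  rw [fderiv_fun_mul hf hg]
  simp [smul_eq_mul]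
  ring

lemma d_sub {f g : ℝ × ℝ → ℝ} {p w : ℝ × ℝ} (hf : DifferentiableAt ℝ f p)
    (hg : DifferentiableAt ℝ g p) :
    fderiv ℝ (fun q => f q - g q) p w = fderiv ℝ f p w - fderiv ℝ g p w := by
  rw [fderiv_fun_sub hf hg]; rfl

lemma d_exp {f : ℝ × ℝ → ℝ} {p w : ℝ × ℝ} (hf : DifferentiableAt ℝ f p) :
    fderiv ℝ (fun q => Real.exp (f q)) p w = Real.exp (f p) * fderiv ℝ f p w := by
  rw [fderiv_exp hf]
  simp [smul_eq_mul]

/-- The purely potential conservation laws `F⁷_h` of the potential system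
`v_x = u`, `v_t = u_x + u²` of the Burgers equation: for any solution `h` of the
backward linear heat equation, `(h e^v, h_x e^v − h u e^v)` is a conserved vector. -/
theorem conserved_vector_burgers_potential_system
    (u v h : ℝ × ℝ → ℝ) (hu : ContDiff ℝ (⊤ : ℕ∞) u) (hv : ContDiff ℝ (⊤ : ℕ∞) v)
    (hh : ContDiff ℝ (⊤ : ℕ∞) h)
    (h1 : ∀ p, px v p = u p)
    (h2 : ∀ p, pt v p = px u p + (u p) ^ 2)
    (hbackheat : ∀ p, pt h p + px (px h) p = 0) :
    ∀ p, pt (fun q => h q * Real.exp (v q)) p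
        + px (fun q => (px h q - h q * u q) * Real.exp (v q)) p = 0 := by
  intro p
  have Du : DifferentiableAt ℝ u p := (hu.differentiable (by simp)) p
  have Dv : DifferentiableAt ℝ v p := (hv.differentiable (by simp)) p
  have Dh : DifferentiableAt ℝ h p := (hh.differentiable (by simp)) p
  have Dpxh : DifferentiableAt ℝ (px h) p := ((contDiff_px' hh).differentiable (by simp)) p
  have DE : DifferentiableAt ℝ (fun q => Real.exp (v q)) p := Dv.exp
  have Dhu : DifferentiableAt ℝ (fun q => h q * u q) p := Dh.mul Du
  have DG1 : DifferentiableAt ℝ (fun q => px h q - h q * u q) p := Dpxh.sub Dhu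
  show fderiv ℝ (fun q => h q * Real.exp (v q)) p (1,0)
      + fderiv ℝ (fun q => (px h q - h q * u q) * Real.exp (v q)) p (0,1) = 0
  rw [d_mul Dh DE, d_mul DG1 DE, d_sub Dpxh Dhu, d_mul Dh Du, d_exp Dv, d_exp Dv]
  have e1 : fderiv ℝ v p (0, 1) = u p := h1 p
  have e2 : fderiv ℝ v p (1, 0) = fderiv ℝ u p (0, 1) + (u p) ^ 2 := h2 p
  have e3 : fderiv ℝ h p (1, 0) + fderiv ℝ (px h) p (0, 1) = 0 := hbackheat p
  rw [e1, e2]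
  rw [show px h p = fderiv ℝ h p (0,1) from rfl]
  linear_combination Real.exp (v p) * e3
end
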